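/- arXiv:1910.06202 — 4 statements merged into one kernel-verified Lean document; each statement's English description precedes it below -/
import Mathlib

section
/- In the system Vc = ⟨PC, ID, CM, CC, CV, CA, CSO; RCEC⟩, the rule RCK for n = 2 is derivable: if ⊢ ψ₁ ∧ ψ₂ → ψ then ⊢ (φ>ψ₁) ∧ (φ>ψ₂) → (φ>ψ). -/
inductive Form where
  | var : Nat → Form
  | bot : Form
  | neg : Form → Form
  | conj : Form → Form → Form
  | disj : Form → Form → Form
  | imp : Form → Form → Form
  | cond : Form → Form → Form

def Form.iff (p q : Form) : Form := Form.conj (Form.imp p q) (Form.imp q p)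

/-- A boolean valuation respecting the classical connectives
(conditional subformulas are treated as atoms). -/
def ClassVal (v : Form → Bool) : Prop :=
  v Form.bot = false ∧
  (∀ p, v (Form.neg p) = ! v p) ∧
  (∀ p q, v (Form.conj p q) = (v p && v q)) ∧
  (∀ p q, v (Form.disj p q) = (v p || v q)) ∧
  (∀ p q, v (Form.imp p q) = (! v p || v q))

/-- Classical tautologies. -/
def IsTaut (p : Form) : Prop := ∀ v, ClassVal v → v p = true

/-- The system Vc = ⟨PC, ID, CM, CC, CV, CA, CSO; RCEC⟩. -/
inductive Der : Form → Prop where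
  | taut : ∀ p, IsTaut p → Der p
  | mp : ∀ p q, Der (Form.imp p q) → Der p → Der q
  | id : ∀ p, Der (Form.cond p p)
  | cm : ∀ p q r, Der (Form.imp (Form.cond p (Form.conj q r))
      (Form.conj (Form.cond p q) (Form.cond p r)))
  | cc : ∀ p q r, Der (Form.imp (Form.conj (Form.cond p q) (Form.cond p r))
      (Form.cond p (Form.conj q r)))
  | cv : ∀ p q r, Der (Form.imp
      (Form.conj (Form.cond p r) (Form.neg (Form.cond p (Form.neg q))))
      (Form.cond (Form.conj p q) r))
  | ca : ∀ p q r, Der (Form.imp (Form.conj (Form.cond p r) (Form.cond q r))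
      (Form.cond (Form.disj p q) r))
  | cso : ∀ p q r, Der (Form.imp (Form.conj (Form.cond p q) (Form.cond q p))
      (Form.iff (Form.cond p r) (Form.cond q r)))
  | rcec : ∀ p q r, Der (Form.iff p q) → Der (Form.iff (Form.cond r p) (Form.cond r q))

/-- RCK for n = 2 is derivable in Vc. -/
theorem rck2_derivable (p q1 q2 q : Form)
    (h : Der (Form.imp (Form.conj q1 q2) q)) :
    Der (Form.imp (Form.conj (Form.cond p q1) (Form.cond p q2)) (Form.cond p q)) := by
  -- step 1: (q1∧q2) ↔ ((q1∧q2)∧q)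
  have hiff : Der (Form.iff (Form.conj q1 q2) (Form.conj (Form.conj q1 q2) q)) := by
    apply Der.mp _ _ _ h
    apply Der.taut
    intro v ⟨hb, hn, hc, hd, hi⟩
    simp only [Form.iff, hc, hi]
    cases v q1 <;> cases v q2 <;> cases v q <;> simp
  have hrcec := Der.rcec _ _ p hiff
  have hcc := Der.cc p q1 q2
  have hcm := Der.cm p (Form.conj q1 q2) q
  -- glue tautology:
  -- (B ↔ B') → (A → B) → (B' → (p>(q1∧q2)) ∧ (p>q)) → (A → p>q)
  apply Der.mp _ _ (Der.mp _ _ (Der.mp _ _ _ hrcec) hcc) hcm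
  apply Der.taut
  intro v ⟨hb, hn, hc, hd, hi⟩
  simp only [Form.iff, hc, hi]
  cases v (Form.cond p (Form.conj q1 q2)) <;>
    cases v (Form.cond p (Form.conj (Form.conj q1 q2) q)) <;>
    cases v (Form.cond p q1) <;> cases v (Form.cond p q2) <;>
    cases v (Form.cond p q) <;> simp
end

section
/- In the system Vc = ⟨PC, ID, CM, CC, CV, CA, CSO; RCEC⟩, the axiom DAE is derivable: ⊢ (φ∨ψ > φ) ∨ (φ∨ψ > ψ) ∨ ((φ∨ψ > χ) ↔ (φ>χ)∧(ψ>χ)). -/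
/-- Abstract evaluation: propositional connectives computed, conditionals as atoms. -/
def evalA (a : Form → Bool) : Form → Bool
  | .var n => a (.var n)
  | .bot => false
  | .neg p => ! evalA a p
  | .conj p q => evalA a p && evalA a q
  | .disj p q => evalA a p || evalA a q
  | .imp p q => ! evalA a p || evalA a q
  | .cond p q => a (.cond p q)

lemma eval_eq {v : Form → Bool} (hv : ClassVal v) : ∀ f, v f = evalA v f := by
  obtain ⟨hb, hn, hc, hd, hi⟩ := hv
  intro f
  induction f with
  | var n => rfl
  | bot => simpa [evalA] using hb
  | neg p ih => simp [evalA, hn, ih]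
  | conj p q ih1 ih2 => simp [evalA, hc, ih1, ih2]
  | disj p q ih1 ih2 => simp [evalA, hd, ih1, ih2]
  | imp p q ih1 ih2 => simp [evalA, hi, ih1, ih2]
  | cond p q _ _ => rfl

lemma derT (f : Form) (h : ∀ a : Form → Bool, evalA a f = true) : Der f :=
  Der.taut f (fun v hv => by rw [eval_eq hv]; exact h v)

open Form in
/-- DAE is derivable in Vc. -/
theorem dae_derivable (p q r : Form) :
    Der (Form.disj (Form.cond (Form.disj p q) p)
      (Form.disj (Form.cond (Form.disj p q) q)
        (Form.iff (Form.cond (Form.disj p q) r)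
          (Form.conj (Form.cond p r) (Form.cond q r))))) := by
  -- abbreviation A = p ∨ q
  -- L1 : (A > ¬p) → (A > q)
  have hL1 : Der (imp (cond (disj p q) (neg p)) (cond (disj p q) q)) := by
    have h0 := Der.id (disj p q)
    have h1 := Der.cc (disj p q) (disj p q) (neg p)
    have h2 : Der (Form.iff (conj (disj p q) (neg p)) (conj (neg p) q)) := by
      apply derT
      intro a
      simp only [evalA, Form.iff]
      cases hp : evalA a p <;> cases hq : evalA a q <;> simp
    have h3 := Der.rcec _ _ (disj p q) h2
    have h4 := Der.cm (disj p q) (neg p) q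
    have comb : Der (imp (cond (disj p q) (disj p q))
        (imp (imp (conj (cond (disj p q) (disj p q)) (cond (disj p q) (neg p)))
            (cond (disj p q) (conj (disj p q) (neg p))))
        (imp (Form.iff (cond (disj p q) (conj (disj p q) (neg p)))
            (cond (disj p q) (conj (neg p) q)))
        (imp (imp (cond (disj p q) (conj (neg p) q))
            (conj (cond (disj p q) (neg p)) (cond (disj p q) q)))
        (imp (cond (disj p q) (neg p)) (cond (disj p q) q)))))) := by
      apply derT
      intro a
      simp only [evalA, Form.iff]
      generalize a (cond (disj p q) (disj p q)) = x0
      generalize a (cond (disj p q) (neg p)) = x1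
      generalize a (cond (disj p q) (conj (disj p q) (neg p))) = x2
      generalize a (cond (disj p q) (conj (neg p) q)) = x3
      generalize a (cond (disj p q) q) = x4
      revert x0 x1 x2 x3 x4; decide
    exact Der.mp _ _ (Der.mp _ _ (Der.mp _ _ (Der.mp _ _ comb h0) h1) h3) h4
  -- L2 : (A > ¬q) → (A > p)
  have hL2 : Der (imp (cond (disj p q) (neg q)) (cond (disj p q) p)) := by
    have h0 := Der.id (disj p q)
    have h1 := Der.cc (disj p q) (disj p q) (neg q)
    have h2 : Der (Form.iff (conj (disj p q) (neg q)) (conj (neg q) p)) := by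
      apply derT
      intro a
      simp only [evalA, Form.iff]
      cases hp : evalA a p <;> cases hq : evalA a q <;> simp
    have h3 := Der.rcec _ _ (disj p q) h2
    have h4 := Der.cm (disj p q) (neg q) p
    have comb : Der (imp (cond (disj p q) (disj p q))
        (imp (imp (conj (cond (disj p q) (disj p q)) (cond (disj p q) (neg q)))
            (cond (disj p q) (conj (disj p q) (neg q))))
        (imp (Form.iff (cond (disj p q) (conj (disj p q) (neg q)))
            (cond (disj p q) (conj (neg q) p)))
        (imp (imp (cond (disj p q) (conj (neg q) p))
            (conj (cond (disj p q) (neg q)) (cond (disj p q) p)))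
        (imp (cond (disj p q) (neg q)) (cond (disj p q) p)))))) := by
      apply derT
      intro a
      simp only [evalA, Form.iff]
      generalize a (cond (disj p q) (disj p q)) = x0
      generalize a (cond (disj p q) (neg q)) = x1
      generalize a (cond (disj p q) (conj (disj p q) (neg q))) = x2
      generalize a (cond (disj p q) (conj (neg q) p)) = x3
      generalize a (cond (disj p q) p) = x4
      revert x0 x1 x2 x3 x4; decide
    exact Der.mp _ _ (Der.mp _ _ (Der.mp _ _ (Der.mp _ _ comb h0) h1) h3) h4
  -- (A ∧ p) > p
  have hc1p : Der (cond (conj (disj p q) p) p) := by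
    have h0 := Der.id (conj (disj p q) p)
    have h2 : Der (Form.iff (conj (disj p q) p) p) := by
      apply derT
      intro a
      simp only [evalA, Form.iff]
      cases hp : evalA a p <;> cases hq : evalA a q <;> simp
    have h3 := Der.rcec _ _ (conj (disj p q) p) h2
    have comb : Der (imp (cond (conj (disj p q) p) (conj (disj p q) p))
        (imp (Form.iff (cond (conj (disj p q) p) (conj (disj p q) p))
            (cond (conj (disj p q) p) p))
        (cond (conj (disj p q) p) p))) := by
      apply derT
      intro a
      simp only [evalA, Form.iff]
      generalize a (cond (conj (disj p q) p) (conj (disj p q) p)) = x0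
      generalize a (cond (conj (disj p q) p) p) = x1
      revert x0 x1; decide
    exact Der.mp _ _ (Der.mp _ _ comb h0) h3
  -- p > (A ∧ p)
  have hc2p : Der (cond p (conj (disj p q) p)) := by
    have h0 := Der.id p
    have h2 : Der (Form.iff p (conj (disj p q) p)) := by
      apply derT
      intro a
      simp only [evalA, Form.iff]
      cases hp : evalA a p <;> cases hq : evalA a q <;> simp
    have h3 := Der.rcec _ _ p h2
    have comb : Der (imp (cond p p)
        (imp (Form.iff (cond p p) (cond p (conj (disj p q) p)))
        (cond p (conj (disj p q) p)))) := by
      apply derT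
      intro a
      simp only [evalA, Form.iff]
      generalize a (cond p p) = x0
      generalize a (cond p (conj (disj p q) p)) = x1
      revert x0 x1; decide
    exact Der.mp _ _ (Der.mp _ _ comb h0) h3
  -- (A ∧ q) > q
  have hc1q : Der (cond (conj (disj p q) q) q) := by
    have h0 := Der.id (conj (disj p q) q)
    have h2 : Der (Form.iff (conj (disj p q) q) q) := by
      apply derT
      intro a
      simp only [evalA, Form.iff]
      cases hp : evalA a p <;> cases hq : evalA a q <;> simp
    have h3 := Der.rcec _ _ (conj (disj p q) q) h2
    have comb : Der (imp (cond (conj (disj p q) q) (conj (disj p q) q))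
        (imp (Form.iff (cond (conj (disj p q) q) (conj (disj p q) q))
            (cond (conj (disj p q) q) q))
        (cond (conj (disj p q) q) q))) := by
      apply derT
      intro a
      simp only [evalA, Form.iff]
      generalize a (cond (conj (disj p q) q) (conj (disj p q) q)) = x0
      generalize a (cond (conj (disj p q) q) q) = x1
      revert x0 x1; decide
    exact Der.mp _ _ (Der.mp _ _ comb h0) h3
  -- q > (A ∧ q)
  have hc2q : Der (cond q (conj (disj p q) q)) := by
    have h0 := Der.id q
    have h2 : Der (Form.iff q (conj (disj p q) q)) := by
      apply derT
      intro a
      simp only [evalA, Form.iff]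
      cases hp : evalA a p <;> cases hq : evalA a q <;> simp
    have h3 := Der.rcec _ _ q h2
    have comb : Der (imp (cond q q)
        (imp (Form.iff (cond q q) (cond q (conj (disj p q) q)))
        (cond q (conj (disj p q) q)))) := by
      apply derT
      intro a
      simp only [evalA, Form.iff]
      generalize a (cond q q) = x0
      generalize a (cond q (conj (disj p q) q)) = x1
      revert x0 x1; decide
    exact Der.mp _ _ (Der.mp _ _ comb h0) h3
  -- CSO-derived equivalences: ((A∧p) > r) ↔ (p > r), ((A∧q) > r) ↔ (q > r)
  have hcso1 : Der (Form.iff (cond (conj (disj p q) p) r) (cond p r)) := by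
    have hcso := Der.cso (conj (disj p q) p) p r
    have comb : Der (imp (imp (conj (cond (conj (disj p q) p) p) (cond p (conj (disj p q) p)))
          (Form.iff (cond (conj (disj p q) p) r) (cond p r)))
        (imp (cond (conj (disj p q) p) p)
        (imp (cond p (conj (disj p q) p))
        (Form.iff (cond (conj (disj p q) p) r) (cond p r))))) := by
      apply derT
      intro a
      simp only [evalA, Form.iff]
      generalize a (cond (conj (disj p q) p) p) = x0
      generalize a (cond p (conj (disj p q) p)) = x1
      generalize a (cond (conj (disj p q) p) r) = x2
      generalize a (cond p r) = x3
      revert x0 x1 x2 x3; decide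
    exact Der.mp _ _ (Der.mp _ _ (Der.mp _ _ comb hcso) hc1p) hc2p
  have hcso2 : Der (Form.iff (cond (conj (disj p q) q) r) (cond q r)) := by
    have hcso := Der.cso (conj (disj p q) q) q r
    have comb : Der (imp (imp (conj (cond (conj (disj p q) q) q) (cond q (conj (disj p q) q)))
          (Form.iff (cond (conj (disj p q) q) r) (cond q r)))
        (imp (cond (conj (disj p q) q) q)
        (imp (cond q (conj (disj p q) q))
        (Form.iff (cond (conj (disj p q) q) r) (cond q r))))) := by
      apply derT
      intro a
      simp only [evalA, Form.iff]
      generalize a (cond (conj (disj p q) q) q) = x0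
      generalize a (cond q (conj (disj p q) q)) = x1
      generalize a (cond (conj (disj p q) q) r) = x2
      generalize a (cond q r) = x3
      revert x0 x1 x2 x3; decide
    exact Der.mp _ _ (Der.mp _ _ (Der.mp _ _ comb hcso) hc1q) hc2q
  -- L3 : ¬(A>¬p) ∧ ¬(A>¬q) → ((A>r) ↔ (p>r)∧(q>r))
  have hcv1 := Der.cv (disj p q) p r
  have hcv2 := Der.cv (disj p q) q r
  have hca := Der.ca p q r
  have hL3 : Der (imp (conj (neg (cond (disj p q) (neg p))) (neg (cond (disj p q) (neg q))))
      (Form.iff (cond (disj p q) r) (conj (cond p r) (cond q r)))) := by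
    have comb : Der (imp (imp (conj (cond (disj p q) r) (neg (cond (disj p q) (neg p))))
          (cond (conj (disj p q) p) r))
        (imp (imp (conj (cond (disj p q) r) (neg (cond (disj p q) (neg q))))
          (cond (conj (disj p q) q) r))
        (imp (Form.iff (cond (conj (disj p q) p) r) (cond p r))
        (imp (Form.iff (cond (conj (disj p q) q) r) (cond q r))
        (imp (imp (conj (cond p r) (cond q r)) (cond (disj p q) r))
        (imp (conj (neg (cond (disj p q) (neg p))) (neg (cond (disj p q) (neg q))))
          (Form.iff (cond (disj p q) r) (conj (cond p r) (cond q r))))))))) := by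
      apply derT
      intro a
      simp only [evalA, Form.iff]
      generalize a (cond (disj p q) r) = x0
      generalize a (cond (disj p q) (neg p)) = x1
      generalize a (cond (disj p q) (neg q)) = x2
      generalize a (cond (conj (disj p q) p) r) = x3
      generalize a (cond (conj (disj p q) q) r) = x4
      generalize a (cond p r) = x5
      generalize a (cond q r) = x6
      revert x0 x1 x2 x3 x4 x5 x6; decide
    exact Der.mp _ _ (Der.mp _ _ (Der.mp _ _ (Der.mp _ _ (Der.mp _ _ comb hcv1) hcv2) hcso1) hcso2) hca
  -- final combination
  have comb : Der (imp (imp (cond (disj p q) (neg p)) (cond (disj p q) q))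
      (imp (imp (cond (disj p q) (neg q)) (cond (disj p q) p))
      (imp (imp (conj (neg (cond (disj p q) (neg p))) (neg (cond (disj p q) (neg q))))
          (Form.iff (cond (disj p q) r) (conj (cond p r) (cond q r))))
      (Form.disj (Form.cond (Form.disj p q) p)
        (Form.disj (Form.cond (Form.disj p q) q)
          (Form.iff (Form.cond (Form.disj p q) r)
            (Form.conj (Form.cond p r) (Form.cond q r)))))))) := by
    apply derT
    intro a
    simp only [evalA, Form.iff]
    generalize a (cond (disj p q) (neg p)) = x0
    generalize a (cond (disj p q) (neg q)) = x1
    generalize a (cond (disj p q) p) = x2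
    generalize a (cond (disj p q) q) = x3
    generalize a (cond (disj p q) r) = x4
    generalize a (cond p r) = x5
    generalize a (cond q r) = x6
    revert x0 x1 x2 x3 x4 x5 x6; decide
  exact Der.mp _ _ (Der.mp _ _ (Der.mp _ _ comb hL1) hL2) hL3
end

section
/- In the system Vc = ⟨PC, ID, CM, CC, CV, CA, CSO; RCEC⟩, the cautious monotonicity axiom AC is derivable: ⊢ (φ>ψ) ∧ (φ>χ) → (φ∧ψ > χ). -/
/-- Chaining tautology: (A→B) → (B→C) → (A→C). -/
lemma der_chain (a b c : Form) :
    Der (Form.imp (Form.imp a b) (Form.imp (Form.imp b c) (Form.imp a c))) := by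
  apply Der.taut
  intro v hv
  obtain ⟨_, _, _, _, hi⟩ := hv
  simp only [hi]
  cases v a <;> cases v b <;> cases v c <;> simp

/-- Pairing tautology: A → B → A∧B. -/
lemma der_pair (a b : Form) :
    Der (Form.imp a (Form.imp b (Form.conj a b))) := by
  apply Der.taut
  intro v hv
  obtain ⟨_, _, hc, _, hi⟩ := hv
  simp only [hi, hc]
  cases v a <;> cases v b <;> simp

/-- The big propositional combination used for AC. -/
lemma der_combine (a1 a2 b1 b2 c : Form) :
    Der (Form.imp (Form.imp a1 b1)
      (Form.imp b2
        (Form.imp (Form.imp (Form.conj b1 b2)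
            (Form.conj (Form.imp a2 c) (Form.imp c a2)))
          (Form.imp (Form.conj a1 a2) c)))) := by
  apply Der.taut
  intro v hv
  obtain ⟨_, _, hc, _, hi⟩ := hv
  simp only [hi, hc]
  cases v a1 <;> cases v a2 <;> cases v b1 <;> cases v b2 <;> cases v c <;> simp

/-- AC (cautious monotonicity) is derivable in Vc. -/
theorem ac_derivable (p q r : Form) :
    Der (Form.imp (Form.conj (Form.cond p q) (Form.cond p r))
      (Form.cond (Form.conj p q) r)) := by
  -- Step 1: (p>q) → (p > p∧q)
  have h1 : Der (Form.imp (Form.cond p q)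
      (Form.conj (Form.cond p p) (Form.cond p q))) :=
    Der.mp _ _ (der_pair (Form.cond p p) (Form.cond p q)) (Der.id p)
  have hcc := Der.cc p p q
  have hB1 : Der (Form.imp (Form.cond p q) (Form.cond p (Form.conj p q))) :=
    Der.mp _ _ (Der.mp _ _ (der_chain _ _ _) h1) hcc
  -- Step 2: (p∧q) > p
  have hcm := Der.cm (Form.conj p q) p q
  have h2 : Der (Form.conj (Form.cond (Form.conj p q) p)
      (Form.cond (Form.conj p q) q)) :=
    Der.mp _ _ hcm (Der.id (Form.conj p q))
  have hB2 : Der (Form.cond (Form.conj p q) p) := by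
    refine Der.mp _ _ (Der.taut _ ?_) h2
    intro v hv
    obtain ⟨_, _, hc, _, hi⟩ := hv
    simp only [hi, hc]
    cases v (Form.cond (Form.conj p q) p) <;>
      cases v (Form.cond (Form.conj p q) q) <;> simp
  -- Step 3: CSO instance
  have hcso := Der.cso p (Form.conj p q) r
  -- Combine
  have hcomb := der_combine (Form.cond p q) (Form.cond p r)
    (Form.cond p (Form.conj p q)) (Form.cond (Form.conj p q) p)
    (Form.cond (Form.conj p q) r)
  exact Der.mp _ _ (Der.mp _ _ (Der.mp _ _ hcomb hB1) hB2) hcso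
end

section
/- In the system Vc = ⟨PC, ID, CM, CC, CV, CA, CSO; RCEC⟩, the cautious cut axiom RT is derivable: ⊢ (φ>ψ) ∧ (ψ∧φ > χ) → (φ>χ). -/
lemma taut_proj2 (a b : Form) : Der (Form.imp (Form.conj a b) b) := by
  apply Der.taut
  intro v ⟨hb, hn, hc, hd, hi⟩
  simp only [hc, hi]
  cases v a <;> cases v b <;> simp

lemma taut_big (A P0 W T Pr Qr : Form) :
    Der (Form.imp (Form.imp (Form.conj A P0) W)
      (Form.imp (Form.imp (Form.conj W T)
          (Form.conj (Form.imp Pr Qr) (Form.imp Qr Pr)))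
        (Form.imp P0 (Form.imp T (Form.imp (Form.conj A Qr) Pr))))) := by
  apply Der.taut
  intro v ⟨hb, hn, hc, hd, hi⟩
  simp only [hc, hi]
  cases v A <;> cases v P0 <;> cases v W <;> cases v T <;> cases v Pr <;> cases v Qr <;> simp

/-- RT (cautious cut) is derivable in Vc. -/
theorem rt_derivable (p q r : Form) :
    Der (Form.imp (Form.conj (Form.cond p q) (Form.cond (Form.conj q p) r))
      (Form.cond p r)) := by
  -- T : (q∧p) > p
  have hT : Der (Form.cond (Form.conj q p) p) := by
    have h1 := Der.cm (Form.conj q p) q p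
    have h2 := Der.mp _ _ h1 (Der.id (Form.conj q p))
    exact Der.mp _ _ (taut_proj2 _ _) h2
  have h1 := Der.cc p q p  -- (p>q ∧ p>p) → p>(q∧p)
  have h2 := Der.cso p (Form.conj q p) r
  have big := taut_big (Form.cond p q) (Form.cond p p) (Form.cond p (Form.conj q p))
    (Form.cond (Form.conj q p) p) (Form.cond p r) (Form.cond (Form.conj q p) r)
  have s1 := Der.mp _ _ big h1
  have s2 := Der.mp _ _ s1 h2
  have s3 := Der.mp _ _ s2 (Der.id p)
  exact Der.mp _ _ s3 hT
end
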